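/- arXiv:1612.00295 — 2 statements merged into one kernel-verified Lean document; each statement's English description precedes it below -/
import Mathlib

section
/- If A ⊆ B are two convex bodies (compact convex sets with nonempty interior) in ℝⁿ with n ≥ 2, then the (n−1)-dimensional Hausdorff measure of the boundary of A is at most that of the boundary of B, i.e. ℋ^{n−1}(∂A) ≤ ℋ^{n−1}(∂B). -/
open MeasureTheory RealInnerProductSpace

/-!
The nearest-point map `P` onto a closed convex set `A` is `1`-Lipschitz, so it does not
increase Hausdorff measure, and `P '' ∂B ⊇ ∂A`: at `x ∈ ∂A` take an outer normal `u` of a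
supporting hyperplane and follow the ray `x + τ u`, `τ ≥ 0`, until it leaves the bounded set
`B ⊇ A`. The exit point `y ∈ ∂B` has `y - x` in the normal cone of `A` at `x`, hence
`P y = x`.
-/

theorem IsPreconnected.inter_frontier_nonempty {X : Type*} [TopologicalSpace X] {s t : Set X}
    (hs : IsPreconnected s) (hst : (s ∩ t).Nonempty) (hst' : (s \ t).Nonempty) :
    (s ∩ frontier t).Nonempty := by
  by_contra h
  have hint : ∀ z ∈ s, z ∈ t → z ∈ interior t := fun z hzs hzt =>
    by_contra fun hi => h ⟨z, hzs, subset_closure hzt, hi⟩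
  have hext : ∀ z ∈ s, z ∉ t → z ∈ (closure t)ᶜ := fun z hzs hzt hc =>
    h ⟨z, hzs, hc, fun hi => hzt (interior_subset hi)⟩
  have hcover : s ⊆ interior t ∪ (closure t)ᶜ := fun z hz => by
    by_cases hzt : z ∈ t
    exacts [Or.inl (hint z hz hzt), Or.inr (hext z hz hzt)]
  obtain ⟨z, -, hzi, hzc⟩ := hs _ _ isOpen_interior isClosed_closure.isOpen_compl hcover
    (hst.imp fun z hz => ⟨hz.1, hint z hz.1 hz.2⟩)
    (hst'.imp fun z hz => ⟨hz.1, hext z hz.1 hz.2⟩)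
  exact hzc (interior_subset_closure hzi)

theorem exists_nonneg_add_smul_mem_frontier {E : Type*} [NormedAddCommGroup E] [NormedSpace ℝ E]
    {B : Set E} (hB : Bornology.IsBounded B) {x u : E} (hx : x ∈ B) (hu : u ≠ 0) :
    ∃ τ : ℝ, 0 ≤ τ ∧ x + τ • u ∈ frontier B := by
  obtain ⟨R, hR⟩ := (Metric.isBounded_iff_subset_closedBall x).1 hB
  have hu' : 0 < ‖u‖ := norm_pos_iff.2 hu
  set t := (|R| + 1) / ‖u‖
  have hout : x + t • u ∉ B := fun h => by
    have := hR h
    rw [Metric.mem_closedBall, dist_eq_norm, add_sub_cancel_left, norm_smul, Real.norm_eq_abs,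
      abs_of_nonneg (by positivity), div_mul_cancel₀ _ hu'.ne'] at this
    linarith [le_abs_self R]
  have hray : IsPreconnected ((fun τ : ℝ => x + τ • u) '' Set.Ici 0) :=
    isPreconnected_Ici.image _ (by fun_prop : Continuous fun τ : ℝ => x + τ • u).continuousOn
  obtain ⟨_, ⟨τ, hτ, rfl⟩, hfr⟩ := hray.inter_frontier_nonempty
    ⟨x, ⟨0, Set.mem_Ici.2 le_rfl, by simp⟩, hx⟩
    ⟨_, ⟨t, Set.mem_Ici.2 (by positivity), rfl⟩, hout⟩
  exact ⟨τ, hτ, hfr⟩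

section

variable {F : Type*} [NormedAddCommGroup F] [InnerProductSpace ℝ F]

theorem norm_sub_sq_le_inner_of_inner_nonpos {x y p q : F} (hx : ⟪x - p, q - p⟫ ≤ 0)
    (hy : ⟪y - q, p - q⟫ ≤ 0) : ‖p - q‖ ^ 2 ≤ ⟪x - y, p - q⟫ := by
  have : ⟪x - y, p - q⟫ - ‖p - q‖ ^ 2 = -(⟪x - p, q - p⟫ + ⟪y - q, p - q⟫) := by
    rw [← real_inner_self_eq_norm_sq]
    simp only [inner_sub_left, inner_sub_right, real_inner_comm]
    ring
  linarith

theorem exists_ne_zero_inner_sub_nonpos_of_notMem_interior [CompleteSpace F] {A : Set F}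
    (hA : Convex ℝ A) (hAint : (interior A).Nonempty) {x : F} (hx : x ∉ interior A) :
    ∃ u ≠ 0, ∀ a ∈ A, ⟪u, a - x⟫ ≤ 0 := by
  obtain ⟨f, hf, hfA⟩ := geometric_hahn_banach_of_nonempty_interior_point hA hx hAint
  refine ⟨(InnerProductSpace.toDual ℝ F).symm f, by simpa using hf, fun a ha => ?_⟩
  rw [InnerProductSpace.toDual_symm_apply, map_sub, sub_nonpos]
  exact hfA a ha

/-- The variational characterization of the nearest-point map onto a convex set `K`. -/
def IsMetricProjection (K : Set F) (P : F → F) : Prop :=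
  ∀ x, P x ∈ K ∧ ∀ w ∈ K, ⟪x - P x, w - P x⟫ ≤ 0

theorem exists_isMetricProjection {K : Set F} (hne : K.Nonempty) (hc : IsComplete K)
    (hK : Convex ℝ K) : ∃ P, IsMetricProjection K P := by
  choose P hPK hP using exists_norm_eq_iInf_of_complete_convex hne hc hK
  exact ⟨P, fun x => ⟨hPK x, (norm_eq_iInf_iff_real_inner_le_zero hK (hPK x)).1 (hP x)⟩⟩

namespace IsMetricProjection

variable {K : Set F} {P : F → F}

theorem eq_of_inner_sub_nonpos (hP : IsMetricProjection K P) {y p : F} (hp : p ∈ K)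
    (hy : ∀ w ∈ K, ⟪y - p, w - p⟫ ≤ 0) : P y = p := by
  have h := norm_sub_sq_le_inner_of_inner_nonpos (hy _ (hP y).1) ((hP y).2 p hp)
  rw [sub_self, inner_zero_left] at h
  simpa [sub_eq_zero, eq_comm] using h

theorem lipschitzWith_one (hP : IsMetricProjection K P) : LipschitzWith 1 P := by
  refine LipschitzWith.of_dist_le_mul fun x y => ?_
  rw [NNReal.coe_one, one_mul, dist_eq_norm, dist_eq_norm]
  have h := norm_sub_sq_le_inner_of_inner_nonpos ((hP x).2 _ (hP y).1) ((hP y).2 _ (hP x).1)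
  have hcs := real_inner_le_norm (x - y) (P x - P y)
  nlinarith [norm_nonneg (P x - P y), norm_nonneg (x - y)]

theorem apply_add_smul_eq (hP : IsMetricProjection K P) {x u : F} (hx : x ∈ K)
    (hu : ∀ a ∈ K, ⟪u, a - x⟫ ≤ 0) {τ : ℝ} (hτ : 0 ≤ τ) : P (x + τ • u) = x :=
  hP.eq_of_inner_sub_nonpos hx fun w hw => by
    rw [add_sub_cancel_left, real_inner_smul_left]
    exact mul_nonpos_of_nonneg_of_nonpos hτ (hu w hw)

theorem frontier_subset_image_frontier [CompleteSpace F] (hP : IsMetricProjection K P)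
    (hcl : IsClosed K) (hK : Convex ℝ K) (hint : (interior K).Nonempty) {B : Set F}
    (hB : Bornology.IsBounded B) (hKB : K ⊆ B) : frontier K ⊆ P '' frontier B := by
  intro x hx
  have hxK : x ∈ K := hcl.frontier_subset hx
  obtain ⟨u, hu0, hu⟩ := exists_ne_zero_inner_sub_nonpos_of_notMem_interior hK hint hx.2
  obtain ⟨τ, hτ, hfr⟩ := exists_nonneg_add_smul_mem_frontier hB (hKB hxK) hu0
  exact ⟨_, hfr, hP.apply_add_smul_eq hxK hu hτ⟩

end IsMetricProjection

theorem hausdorffMeasure_frontier_le_of_subset [CompleteSpace F] [MeasurableSpace F]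
    [BorelSpace F] {d : ℝ} (hd : 0 ≤ d) {A B : Set F} (hAcl : IsClosed A) (hA : Convex ℝ A)
    (hAint : (interior A).Nonempty) (hB : Bornology.IsBounded B) (hAB : A ⊆ B) :
    μH[d] (frontier A) ≤ μH[d] (frontier B) := by
  obtain ⟨P, hP⟩ := exists_isMetricProjection (hAint.mono interior_subset) hAcl.isComplete hA
  calc μH[d] (frontier A) ≤ μH[d] (P '' frontier B) :=
        measure_mono (hP.frontier_subset_image_frontier hAcl hA hAint hB hAB)
    _ ≤ μH[d] (frontier B) := by
        simpa using hP.lipschitzWith_one.hausdorffMeasure_image_le hd (frontier B)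

end

theorem perimeter_monotone_of_convex_bodies_general
    (n : ℕ) (hn : 2 ≤ n)
    (A B : Set (EuclideanSpace ℝ (Fin n)))
    (hAcp : IsCompact A) (hAcv : Convex ℝ A) (hAint : (interior A).Nonempty)
    (hBcp : IsCompact B)
    (hAB : A ⊆ B) :
    μH[(n : ℝ) - 1] (frontier A) ≤ μH[(n : ℝ) - 1] (frontier B) := by
  have hd : (0 : ℝ) ≤ n - 1 := by
    have : (2 : ℝ) ≤ n := by exact_mod_cast hn
    linarith
  exact hausdorffMeasure_frontier_le_of_subset hd hAcp.isClosed hAcv hAint hBcp.isBounded hAB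

/-- Monotonicity of perimeter: if `A ⊆ B` are convex bodies in `ℝⁿ`, `n ≥ 2`, then
`ℋ^{n-1}(∂A) ≤ ℋ^{n-1}(∂B)`. -/
theorem perimeter_monotone_of_convex_bodies
    (n : ℕ) (hn : 2 ≤ n)
    (A B : Set (EuclideanSpace ℝ (Fin n)))
    (hAcp : IsCompact A) (hAcv : Convex ℝ A) (hAint : (interior A).Nonempty)
    (hBcp : IsCompact B) (hBcv : Convex ℝ B) (hBint : (interior B).Nonempty)
    (hAB : A ⊆ B) :
    μH[(n : ℝ) - 1] (frontier A) ≤ μH[(n : ℝ) - 1] (frontier B) :=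
  perimeter_monotone_of_convex_bodies_general n hn A B hAcp hAcv hAint hBcp hAB
end

section
/- Let (X, μ) be a finite measure space and let g: [0,∞)² → [0,∞) be positively 1-homogeneous and convex. Then for all measurable functions f₁, f₂: X → [0,∞) (integrable), g(∫_X f₁ dμ, ∫_X f₂ dμ) ≤ ∫_X g(f₁, f₂) dμ. -/
/-!
A positively homogeneous convex function on a cone is subadditive, so on the quadrant `g` lies
between `0` and the linear function `s g (1, 0) + t g (0, 1)`, with equality on the boundary; with
its continuity in the open quadrant this makes `g (f₁, f₂)` measurable and integrable.
Homogeneity removes the normalisation in Jensen's inequality for averages: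
`g (∫ F) = μ(X) g (⨍ F) ≤ μ(X) ⨍ g ∘ F = ∫ g ∘ F`. That inequality needs `g` continuous on a
closed convex set, which can fail on the boundary of the quadrant, so it is applied to
`F + ε (1, 1)`, with values in `[ε, ∞)²`; by subadditivity this costs at most `ε μ(X) g (1, 1)`,
and `ε → 0` uses continuity of `g` at `(∫ f₁, ∫ f₂)` when both integrals are positive. If one
integral vanishes, that function is zero a.e. and both sides are computed on a ray, where `g` is
linear.
-/

open MeasureTheory Filter Topology Set

section Homogeneous

variable {E : Type*} [AddCommGroup E] [Module ℝ E] {s : Set E} {g : E → ℝ}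

lemma map_zero_of_homogeneous (hhom : ∀ l : ℝ, 0 < l → ∀ p ∈ s, g (l • p) = l * g p)
    (h0 : (0 : E) ∈ s) : g 0 = 0 := by
  have h := hhom 2 two_pos 0 h0
  rw [smul_zero] at h
  linarith

lemma map_smul_of_homogeneous_of_nonneg (hhom : ∀ l : ℝ, 0 < l → ∀ p ∈ s, g (l • p) = l * g p)
    (h0 : (0 : E) ∈ s) {t : ℝ} (ht : 0 ≤ t) {p : E} (hp : p ∈ s) : g (t • p) = t * g p := by
  rcases ht.eq_or_lt with rfl | ht
  · rw [zero_smul, zero_mul, map_zero_of_homogeneous hhom h0]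
  · exact hhom t ht p hp

lemma ConvexOn.map_add_le_of_homogeneous (hg : ConvexOn ℝ s g)
    (hhom : ∀ l : ℝ, 0 < l → ∀ p ∈ s, g (l • p) = l * g p) {p q : E} (hp : p ∈ s) (hq : q ∈ s) :
    g (p + q) ≤ g p + g q := by
  have hhalf : (0 : ℝ) ≤ 1 / 2 := by norm_num
  have hmid := hg.2 hp hq hhalf hhalf (by norm_num)
  have hsum : p + q = (2 : ℝ) • ((1 / 2 : ℝ) • p + (1 / 2 : ℝ) • q) := by
    rw [smul_add, smul_smul, smul_smul]
    norm_num
  rw [hsum, hhom 2 two_pos _ (hg.1 hp hq hhalf hhalf (by norm_num))]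
  simp only [smul_eq_mul] at hmid
  linarith

end Homogeneous

lemma le_of_continuousAt_of_forall_pos_le {E : Type*} [TopologicalSpace E] [AddCommGroup E]
    [Module ℝ E] [ContinuousAdd E] [ContinuousSMul ℝ E] {g : E → ℝ} {p v : E} {R C : ℝ}
    (hg : ContinuousAt g p) (h : ∀ ε > 0, g (p + ε • v) ≤ R + ε * C) : g p ≤ R := by
  have hpath : Tendsto (fun ε : ℝ => p + ε • v) (𝓝[>] 0) (𝓝 p) :=
    ((continuous_const.add (continuous_id.smul continuous_const)).tendsto' 0 p
      (by simp)).mono_left nhdsWithin_le_nhds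
  have hbound : Tendsto (fun ε : ℝ => R + ε * C) (𝓝[>] 0) (𝓝 R) :=
    ((continuous_const.add (continuous_id.mul continuous_const)).tendsto' 0 R
      (by simp)).mono_left nhdsWithin_le_nhds
  exact le_of_tendsto_of_tendsto (hg.tendsto.comp hpath) hbound
    (eventually_nhdsWithin_of_forall h)

theorem ConvexOn.map_integral_le_integral_of_homogeneous {X E : Type*} [MeasurableSpace X]
    {μ : Measure X} [IsFiniteMeasure μ] [NeZero μ] [NormedAddCommGroup E] [NormedSpace ℝ E]
    [CompleteSpace E] {s : Set E} {g : E → ℝ} {F : X → E} (hg : ConvexOn ℝ s g)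
    (hgc : ContinuousOn g s) (hsc : IsClosed s)
    (hhom : ∀ l : ℝ, 0 < l → ∀ p ∈ s, g (l • p) = l * g p)
    (hFs : ∀ᵐ x ∂μ, F x ∈ s) (hFi : Integrable F μ) (hgFi : Integrable (g ∘ F) μ) :
    g (∫ x, F x ∂μ) ≤ ∫ x, g (F x) ∂μ := by
  rw [← measure_smul_average, ← measure_smul_average,
    hhom _ measureReal_univ_pos _ (hg.1.average_mem hsc hFs hFi), smul_eq_mul]
  exact mul_le_mul_of_nonneg_left (hg.map_average_le hgc hsc hFs hFi hgFi) measureReal_univ_pos.le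

abbrev quadrant : Set (ℝ × ℝ) := Set.Ici 0 ×ˢ Set.Ici 0

lemma mem_quadrant {p : ℝ × ℝ} : p ∈ quadrant ↔ 0 ≤ p.1 ∧ 0 ≤ p.2 := Iff.rfl

section Quadrant

variable {g : ℝ × ℝ → ℝ}

lemma map_zero_left_of_homogeneous (hhom : ∀ l : ℝ, 0 < l → ∀ p ∈ quadrant, g (l • p) = l * g p)
    {t : ℝ} (ht : 0 ≤ t) : g (0, t) = t * g (0, 1) := by
  simpa using map_smul_of_homogeneous_of_nonneg hhom (mem_quadrant.2 ⟨le_rfl, le_rfl⟩) ht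
    (p := (0, 1)) (mem_quadrant.2 ⟨le_rfl, zero_le_one⟩)

lemma map_zero_right_of_homogeneous (hhom : ∀ l : ℝ, 0 < l → ∀ p ∈ quadrant, g (l • p) = l * g p)
    {t : ℝ} (ht : 0 ≤ t) : g (t, 0) = t * g (1, 0) := by
  simpa using map_smul_of_homogeneous_of_nonneg hhom (mem_quadrant.2 ⟨le_rfl, le_rfl⟩) ht
    (p := (1, 0)) (mem_quadrant.2 ⟨zero_le_one, le_rfl⟩)

lemma ConvexOn.continuousOn_Ioi_prod (hg : ConvexOn ℝ quadrant g) :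
    ContinuousOn g (Ioi 0 ×ˢ Ioi 0) :=
  (hg.subset (prod_mono Ioi_subset_Ici_self Ioi_subset_Ici_self)
    ((convex_Ioi 0).prod (convex_Ioi 0))).continuousOn (isOpen_Ioi.prod isOpen_Ioi)

lemma ConvexOn.map_le_of_homogeneous (hg : ConvexOn ℝ quadrant g)
    (hhom : ∀ l : ℝ, 0 < l → ∀ p ∈ quadrant, g (l • p) = l * g p) {p : ℝ × ℝ}
    (hp : p ∈ quadrant) : g p ≤ p.1 * g (1, 0) + p.2 * g (0, 1) := by
  have h := hg.map_add_le_of_homogeneous hhom (p := (p.1, 0)) (q := (0, p.2))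
    (mem_quadrant.2 ⟨hp.1, le_rfl⟩) (mem_quadrant.2 ⟨le_rfl, hp.2⟩)
  rwa [Prod.mk_add_mk, add_zero, zero_add, map_zero_right_of_homogeneous hhom hp.1,
    map_zero_left_of_homogeneous hhom hp.2] at h

lemma map_eq_of_notMem_Ioi_prod (hhom : ∀ l : ℝ, 0 < l → ∀ p ∈ quadrant, g (l • p) = l * g p)
    {p : ℝ × ℝ} (hp : p ∈ quadrant) (hp' : p ∉ Ioi 0 ×ˢ Ioi 0) :
    g p = p.1 * g (1, 0) + p.2 * g (0, 1) := by
  obtain ⟨s, t⟩ := p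
  obtain ⟨hs, ht⟩ := mem_quadrant.1 hp
  simp only [mem_prod, mem_Ioi, not_and_or, not_lt] at hp'
  rcases hp' with hs' | ht'
  · obtain rfl := le_antisymm hs' hs
    simp [map_zero_left_of_homogeneous hhom ht]
  · obtain rfl := le_antisymm ht' ht
    simp [map_zero_right_of_homogeneous hhom hs]

variable {X : Type*} [MeasurableSpace X] {μ : Measure X}

lemma ConvexOn.measurable_comp_of_homogeneous (hg : ConvexOn ℝ quadrant g)
    (hhom : ∀ l : ℝ, 0 < l → ∀ p ∈ quadrant, g (l • p) = l * g p) {F : X → ℝ × ℝ}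
    (hF : Measurable F) (hFq : ∀ x, F x ∈ quadrant) : Measurable (g ∘ F) := by
  classical
  let S : Set (ℝ × ℝ) := Ioi 0 ×ˢ Ioi 0
  let ℓ : ℝ × ℝ → ℝ := fun p => p.1 * g (1, 0) + p.2 * g (0, 1)
  have hpiece : Measurable (S.piecewise g ℓ) :=
    hg.continuousOn_Ioi_prod.measurable_piecewise (by fun_prop : Continuous ℓ).continuousOn
      (isOpen_Ioi.prod isOpen_Ioi).measurableSet
  convert hpiece.comp hF using 1
  funext x
  by_cases hx : F x ∈ S
  · simp [piecewise_eq_of_mem _ _ _ hx]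
  · simp [piecewise_eq_of_notMem _ _ _ hx, map_eq_of_notMem_Ioi_prod hhom (hFq x) hx, ℓ]

lemma ConvexOn.integrable_comp_of_homogeneous (hg0 : ∀ p ∈ quadrant, 0 ≤ g p)
    (hg : ConvexOn ℝ quadrant g)
    (hhom : ∀ l : ℝ, 0 < l → ∀ p ∈ quadrant, g (l • p) = l * g p) {F : X → ℝ × ℝ}
    (hF : Measurable F) (hFq : ∀ x, F x ∈ quadrant) (hFi : Integrable F μ) :
    Integrable (fun x => g (F x)) μ := by
  refine ((hFi.fst.mul_const (g (1, 0))).add (hFi.snd.mul_const (g (0, 1)))).mono'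
    (hg.measurable_comp_of_homogeneous hhom hF hFq).aestronglyMeasurable (ae_of_all _ fun x => ?_)
  rw [Real.norm_of_nonneg (hg0 _ (hFq x))]
  exact hg.map_le_of_homogeneous hhom (hFq x)

lemma integral_map_eq_of_integral_fst_eq_zero
    (hhom : ∀ l : ℝ, 0 < l → ∀ p ∈ quadrant, g (l • p) = l * g p) {f₁ f₂ : X → ℝ}
    (hf₁0 : ∀ x, 0 ≤ f₁ x) (hf₂0 : ∀ x, 0 ≤ f₂ x) (hf₁i : Integrable f₁ μ)
    (h : ∫ x, f₁ x ∂μ = 0) : ∫ x, g (f₁ x, f₂ x) ∂μ = g (∫ x, f₁ x ∂μ, ∫ x, f₂ x ∂μ) := by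
  have hf₁z : f₁ =ᵐ[μ] 0 := (integral_eq_zero_iff_of_nonneg hf₁0 hf₁i).1 h
  rw [h, map_zero_left_of_homogeneous hhom (integral_nonneg hf₂0), ← integral_mul_const]
  refine integral_congr_ae ?_
  filter_upwards [hf₁z] with x hx
  rw [hx, Pi.zero_apply, map_zero_left_of_homogeneous hhom (hf₂0 x)]

lemma integral_map_eq_of_integral_snd_eq_zero
    (hhom : ∀ l : ℝ, 0 < l → ∀ p ∈ quadrant, g (l • p) = l * g p) {f₁ f₂ : X → ℝ}
    (hf₁0 : ∀ x, 0 ≤ f₁ x) (hf₂0 : ∀ x, 0 ≤ f₂ x) (hf₂i : Integrable f₂ μ)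
    (h : ∫ x, f₂ x ∂μ = 0) : ∫ x, g (f₁ x, f₂ x) ∂μ = g (∫ x, f₁ x ∂μ, ∫ x, f₂ x ∂μ) := by
  have hf₂z : f₂ =ᵐ[μ] 0 := (integral_eq_zero_iff_of_nonneg hf₂0 hf₂i).1 h
  rw [h, map_zero_right_of_homogeneous hhom (integral_nonneg hf₁0), ← integral_mul_const]
  refine integral_congr_ae ?_
  filter_upwards [hf₂z] with x hx
  rw [hx, Pi.zero_apply, map_zero_right_of_homogeneous hhom (hf₁0 x)]

lemma ConvexOn.map_integral_add_smul_le_of_homogeneous [IsFiniteMeasure μ] [NeZero μ]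
    (hg0 : ∀ p ∈ quadrant, 0 ≤ g p) (hg : ConvexOn ℝ quadrant g)
    (hhom : ∀ l : ℝ, 0 < l → ∀ p ∈ quadrant, g (l • p) = l * g p) {F : X → ℝ × ℝ}
    (hF : Measurable F) (hFq : ∀ x, F x ∈ quadrant) (hFi : Integrable F μ) {ε : ℝ} (hε : 0 < ε) :
    g (∫ x, F x ∂μ + ε • μ.real univ • ((1, 1) : ℝ × ℝ)) ≤
      ∫ x, g (F x) ∂μ + ε * (μ.real univ * g (1, 1)) := by
  let Fε : X → ℝ × ℝ := fun x => F x + ε • (1, 1)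
  have hsε : Ici ε ×ˢ Ici ε ⊆ quadrant :=
    prod_mono (Ici_subset_Ici.2 hε.le) (Ici_subset_Ici.2 hε.le)
  have hFεs : ∀ x, Fε x ∈ Ici ε ×ˢ Ici ε := fun x => by
    simp only [Fε, mem_prod, mem_Ici, Prod.fst_add, Prod.snd_add, Prod.smul_mk, smul_eq_mul,
      mul_one]
    exact ⟨le_add_of_nonneg_left (hFq x).1, le_add_of_nonneg_left (hFq x).2⟩
  have hFεi : Integrable Fε μ := hFi.add (integrable_const _)
  have hFεint : ∫ x, Fε x ∂μ = ∫ x, F x ∂μ + ε • μ.real univ • ((1, 1) : ℝ × ℝ) := by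
    rw [integral_add hFi (integrable_const _), integral_const, smul_comm]
  have hshift : ∀ x, g (Fε x) ≤ g (F x) + ε * g (1, 1) := fun x => by
    rw [← hhom ε hε _ (mem_quadrant.2 ⟨zero_le_one, zero_le_one⟩)]
    exact hg.map_add_le_of_homogeneous hhom (hFq x)
      (mem_quadrant.2 ⟨by simp [hε.le], by simp [hε.le]⟩)
  have hgFi := hg.integrable_comp_of_homogeneous hg0 hhom hF hFq hFi
  have hgFεi :=
    hg.integrable_comp_of_homogeneous hg0 hhom (hF.add_const _) (fun x => hsε (hFεs x)) hFεi
  calc g (∫ x, F x ∂μ + ε • μ.real univ • ((1, 1) : ℝ × ℝ)) = g (∫ x, Fε x ∂μ) := by rw [hFεint]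
    _ ≤ ∫ x, g (Fε x) ∂μ :=
      (hg.subset hsε ((convex_Ici ε).prod (convex_Ici ε))).map_integral_le_integral_of_homogeneous
        (hg.continuousOn_Ioi_prod.mono (prod_mono (Ici_subset_Ioi.2 hε) (Ici_subset_Ioi.2 hε)))
        (isClosed_Ici.prod isClosed_Ici) (fun l hl p hp => hhom l hl p (hsε hp))
        (ae_of_all _ hFεs) hFεi hgFεi
    _ ≤ ∫ x, (g (F x) + ε * g (1, 1)) ∂μ :=
      integral_mono hgFεi (hgFi.add (integrable_const _)) hshift
    _ = ∫ x, g (F x) ∂μ + ε * (μ.real univ * g (1, 1)) := by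
      rw [integral_add hgFi (integrable_const _), integral_const, smul_eq_mul]
      ring

end Quadrant

/-- Jensen's inequality for a positively 1-homogeneous convex function of two integrals:
`g(∫ f₁, ∫ f₂) ≤ ∫ g(f₁, f₂)` on a finite measure space. -/
theorem jensen_homogeneous_convex
    (X : Type*) [MeasurableSpace X] (μ : Measure X) [IsFiniteMeasure μ]
    (g : ℝ × ℝ → ℝ)
    (hg0 : ∀ p : ℝ × ℝ, 0 ≤ p.1 → 0 ≤ p.2 → 0 ≤ g p)
    (hghom : ∀ l : ℝ, 0 < l → ∀ p : ℝ × ℝ, 0 ≤ p.1 → 0 ≤ p.2 →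
      g (l * p.1, l * p.2) = l * g p)
    (hgconv : ConvexOn ℝ (Set.Ici (0 : ℝ) ×ˢ Set.Ici (0 : ℝ)) g)
    (f₁ f₂ : X → ℝ)
    (hf₁m : Measurable f₁) (hf₂m : Measurable f₂)
    (hf₁0 : ∀ x, 0 ≤ f₁ x) (hf₂0 : ∀ x, 0 ≤ f₂ x)
    (hf₁i : Integrable f₁ μ) (hf₂i : Integrable f₂ μ) :
    g (∫ x, f₁ x ∂μ, ∫ x, f₂ x ∂μ) ≤ ∫ x, g (f₁ x, f₂ x) ∂μ := by
  have hhom : ∀ l : ℝ, 0 < l → ∀ p ∈ quadrant, g (l • p) = l * g p :=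
    fun l hl p hp => hghom l hl p hp.1 hp.2
  rcases (integral_nonneg hf₁0 : 0 ≤ ∫ x, f₁ x ∂μ).eq_or_lt with h₁ | h₁
  · exact (integral_map_eq_of_integral_fst_eq_zero hhom hf₁0 hf₂0 hf₁i h₁.symm).ge
  rcases (integral_nonneg hf₂0 : 0 ≤ ∫ x, f₂ x ∂μ).eq_or_lt with h₂ | h₂
  · exact (integral_map_eq_of_integral_snd_eq_zero hhom hf₁0 hf₂0 hf₂i h₂.symm).ge
  have : NeZero μ := ⟨by rintro rfl; simp at h₁⟩
  rw [← integral_pair hf₁i hf₂i]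
  refine le_of_continuousAt_of_forall_pos_le ?_ fun ε hε =>
    hgconv.map_integral_add_smul_le_of_homogeneous (fun p hp => hg0 p hp.1 hp.2) hhom
      (hf₁m.prodMk hf₂m) (fun x => mem_quadrant.2 ⟨hf₁0 x, hf₂0 x⟩) (hf₁i.prodMk hf₂i) hε
  rw [integral_pair hf₁i hf₂i]
  exact hgconv.continuousOn_Ioi_prod.continuousAt
    ((isOpen_Ioi.prod isOpen_Ioi).mem_nhds ⟨h₁, h₂⟩)
end
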